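/- Let f*: ℝ^d → ℝ be a differentiable convex function and x_0, …, x_d ∈ ℝ^d be d+1 points such that the origin 0 lies in the interior of conv{x_0,…,x_d}. Then the set of feasible gradients A = {v ∈ ℝ^d : v · x_i ≤ ∇f*(x_i) · x_i for all i} equals the convex hull of the vertices v_0, …, v_d, where v_i is the unique point with v_i · x_j = ∇f*(x_j) · x_j for all j ≠ i. In particular, A is a compact (bounded) polytope. -/

import Mathlib

/-!
Since `0` is interior to the hull, there are weights `c i > 0` with `∑ c i • x i = 0`. Writing
`b i = ⟪∇f(x i), x i⟫` and `B = ∑ c i * b i`, this relation gives `∑ c i * (b i - ⟪w, x i⟫) = B`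
for every `w`, the identity `∑ c i * (b i - ⟪w, x i⟫) • v i = B • w`, and
`c i * ⟪v i, x i⟫ = c i * b i - B`. The subgradient inequality and Jensen give `B ≥ 0`, so every
`v i` is feasible, and for feasible `w` the coefficients `c i * (b i - ⟪w, x i⟫) / B` are
nonnegative and express `w` as a convex combination of the vertices (when `B = 0` every
constraint is tight at `w`, which forces `w = v i`).
-/

open Set Finset Filter Topology
open scoped RealInnerProductSpace

section Subgradient

variable {E : Type*} [NormedAddCommGroup E] [InnerProductSpace ℝ E] [CompleteSpace E]
  {f : E → ℝ}

theorem ConvexOn.add_inner_gradient_le (hf : ConvexOn ℝ univ f) (hdf : Differentiable ℝ f)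
    (p q : E) : f p + ⟪gradient f p, q - p⟫ ≤ f q := by
  set g : ℝ → ℝ := fun t => f (t • (q - p) + p)
  have hg : ConvexOn ℝ univ g := by
    simpa [Function.comp_def, AffineMap.lineMap_apply] using
      hf.comp_affineMap (AffineMap.lineMap p q)
  have hline : HasDerivAt (fun t : ℝ => t • (q - p) + p) (q - p) 0 := by
    simpa using ((hasDerivAt_id (0 : ℝ)).smul_const (q - p)).add_const p
  have hg' : HasDerivAt g ⟪gradient f p, q - p⟫ 0 := by
    have hfp : HasFDerivAt f (InnerProductSpace.toDual ℝ E (gradient f p))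
        ((0 : ℝ) • (q - p) + p) := by
      simpa using (hdf p).hasGradientAt.hasFDerivAt
    simpa [g, Function.comp_def, InnerProductSpace.toDual_apply_apply] using
      hfp.comp_hasDerivAt (0 : ℝ) hline
  have := hg.le_slope_of_hasDerivAt (mem_univ 0) (mem_univ 1) one_pos hg'
  simp only [slope_def_field, g, zero_smul, one_smul, zero_add, sub_add_cancel, sub_zero,
    div_one] at this
  linarith

theorem ConvexOn.sum_mul_inner_gradient_nonneg {ι : Type*} (s : Finset ι)
    (hf : ConvexOn ℝ univ f) (hdf : Differentiable ℝ f) {x : ι → E} {c : ι → ℝ}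
    (hc : ∀ i ∈ s, 0 ≤ c i) (hc₁ : ∑ i ∈ s, c i = 1) (hc₀ : ∑ i ∈ s, c i • x i = 0) :
    0 ≤ ∑ i ∈ s, c i * ⟪gradient f (x i), x i⟫ := by
  have hjensen : f 0 ≤ ∑ i ∈ s, c i * f (x i) := by
    simpa [hc₀] using hf.map_sum_le hc hc₁ (fun i _ => mem_univ (x i))
  have hsub (i : ι) : f (x i) - f 0 ≤ ⟪gradient f (x i), x i⟫ := by
    have := hf.add_inner_gradient_le hdf (x i) 0
    rw [zero_sub, inner_neg_right] at this
    linarith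
  calc 0 ≤ ∑ i ∈ s, c i * f (x i) - f 0 := sub_nonneg.2 hjensen
    _ = ∑ i ∈ s, c i * (f (x i) - f 0) := by
          simp only [mul_sub, Finset.sum_sub_distrib, ← Finset.sum_mul, hc₁, one_mul]
    _ ≤ _ := Finset.sum_le_sum fun i hi => mul_le_mul_of_nonneg_left (hsub i) (hc i hi)

end Subgradient

theorem convexHull_range_eq_image_stdSimplex {V ι : Type*} [AddCommGroup V] [Module ℝ V]
    [Fintype ι] (x : ι → V) :
    convexHull ℝ (range x) = Fintype.linearCombination ℝ x '' stdSimplex ℝ ι := by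
  classical
  rw [← convexHull_basis_eq_stdSimplex, LinearMap.image_convexHull, ← range_comp]
  congr with i
  simp [Fintype.linearCombination_apply, ite_smul]

theorem exists_pos_weights_of_zero_mem_interior_convexHull {V ι : Type*} [NormedAddCommGroup V]
    [NormedSpace ℝ V] [Fintype ι] {x : ι → V}
    (hx : (0 : V) ∈ interior (convexHull ℝ (range x))) :
    ∃ c : ι → ℝ, (∀ i, 0 < c i) ∧ ∑ i, c i = 1 ∧ ∑ i, c i • x i = 0 := by
  set u := ∑ i, x i
  have hnear : ∀ᶠ s in 𝓝[>] (0 : ℝ), -(s • u) ∈ convexHull ℝ (range x) := by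
    have : Tendsto (fun s : ℝ => -(s • u)) (𝓝 0) (𝓝 0) := by
      simpa using (Continuous.tendsto (by fun_prop : Continuous fun s : ℝ => -(s • u)) 0)
    exact nhdsWithin_le_nhds (this (mem_interior_iff_mem_nhds.mp hx))
  obtain ⟨s, hs_mem, hs_pos⟩ := (hnear.and self_mem_nhdsWithin).exists
  rw [convexHull_range_eq_image_stdSimplex] at hs_mem
  obtain ⟨a, ⟨ha₀, ha₁⟩, hax⟩ := hs_mem
  rw [Fintype.linearCombination_apply] at hax
  -- `0 = (-(s • u) + s • u) / (1 + card ι * s)` with both terms expanded over the `x i`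
  set D : ℝ := 1 + Fintype.card ι * s
  have hD : 0 < D := by positivity
  refine ⟨fun i => (a i + s) / D, fun i => div_pos (by linarith [ha₀ i, hs_pos]) hD, ?_, ?_⟩
  · rw [← Finset.sum_div, Finset.sum_add_distrib, ha₁, Finset.sum_const, Finset.card_univ,
      nsmul_eq_mul, div_self hD.ne']
  · simp only [div_eq_inv_mul, mul_smul, add_smul, ← Finset.smul_sum, Finset.sum_add_distrib,
      hax, u, neg_add_cancel, smul_zero]

section Polytope

variable {E ι : Type*} [NormedAddCommGroup E] [InnerProductSpace ℝ E]

def feasibleSet (x : ι → E) (b : ι → ℝ) : Set E := {w | ∀ k, ⟪w, x k⟫ ≤ b k}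

theorem convex_feasibleSet (x : ι → E) (b : ι → ℝ) : Convex ℝ (feasibleSet x b) := by
  simp only [feasibleSet, ofPred_forall]
  exact convex_iInter fun k => convex_halfSpace_le ((innerₛₗ ℝ).flip (x k)).isLinear (b k)

theorem eq_of_forall_inner_eq_of_span_eq_top {x : ι → E} (hx : Submodule.span ℝ (range x) = ⊤)
    {u w : E} (h : ∀ k, ⟪u, x k⟫ = ⟪w, x k⟫) : u = w :=
  ext_inner_right ℝ <| LinearMap.congr_fun <|
    LinearMap.ext_on_range hx (f := innerₛₗ ℝ u) (g := innerₛₗ ℝ w) h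

variable [Fintype ι] {x : ι → E} {b c : ι → ℝ} {v : ι → E}

theorem sum_mul_inner_eq_zero (hc : ∑ i, c i • x i = 0) (w : E) : ∑ i, c i * ⟪w, x i⟫ = 0 := by
  simp_rw [← real_inner_smul_right, ← inner_sum, hc, inner_zero_right]

theorem sum_mul_sub_inner (hc : ∑ i, c i • x i = 0) (w : E) :
    ∑ i, c i * (b i - ⟪w, x i⟫) = ∑ j, c j * b j := by
  simp only [mul_sub, Finset.sum_sub_distrib, sum_mul_inner_eq_zero hc, sub_zero]

variable [DecidableEq ι]

theorem mul_inner_vertex_self (hc : ∑ i, c i • x i = 0) (hv : ∀ i j, j ≠ i → ⟪v i, x j⟫ = b j)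
    (i : ι) : c i * ⟪v i, x i⟫ = c i * b i - ∑ j, c j * b j := by
  have h := sum_mul_inner_eq_zero hc (v i)
  rw [← Finset.add_sum_erase _ _ (mem_univ i)] at h ⊢
  rw [Finset.sum_congr rfl fun j hj => by rw [hv i j (ne_of_mem_erase hj)]] at h
  linarith

theorem sum_smul_vertex (hc : ∑ i, c i • x i = 0) (hv : ∀ i j, j ≠ i → ⟪v i, x j⟫ = b j)
    (hx : Submodule.span ℝ (range x) = ⊤) (w : E) :
    ∑ i, (c i * (b i - ⟪w, x i⟫)) • v i = (∑ j, c j * b j) • w := by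
  set μ : ι → ℝ := fun i => c i * (b i - ⟪w, x i⟫)
  have hμ : ∑ i, μ i = ∑ j, c j * b j := sum_mul_sub_inner hc w
  refine eq_of_forall_inner_eq_of_span_eq_top hx fun k => ?_
  have hoff : ∑ i ∈ univ.erase k, μ i * ⟪v i, x k⟫ = (∑ j, c j * b j - μ k) * b k := by
    rw [← hμ, ← Finset.add_sum_erase _ _ (mem_univ k), add_sub_cancel_left, Finset.sum_mul]
    exact Finset.sum_congr rfl fun i hi => by rw [hv i k (ne_of_mem_erase hi).symm]
  have hdiag := mul_inner_vertex_self hc hv k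
  simp only [sum_inner, real_inner_smul_left]
  rw [← Finset.add_sum_erase _ _ (mem_univ k), hoff]
  linear_combination (b k - ⟪w, x k⟫) * hdiag

theorem vertex_mem_feasibleSet (hc_pos : ∀ i, 0 < c i) (hc : ∑ i, c i • x i = 0)
    (hv : ∀ i j, j ≠ i → ⟪v i, x j⟫ = b j) (hB : 0 ≤ ∑ j, c j * b j) (i : ι) :
    v i ∈ feasibleSet x b := by
  intro k
  rcases eq_or_ne k i with rfl | hki
  · have := mul_inner_vertex_self hc hv k
    exact le_of_mul_le_mul_left (by linarith) (hc_pos k)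
  · exact (hv i k hki).le

theorem feasibleSet_subset_convexHull [Nonempty ι] (hc_pos : ∀ i, 0 < c i)
    (hc : ∑ i, c i • x i = 0) (hv : ∀ i j, j ≠ i → ⟪v i, x j⟫ = b j)
    (hx : Submodule.span ℝ (range x) = ⊤) (hB : 0 ≤ ∑ j, c j * b j) :
    feasibleSet x b ⊆ convexHull ℝ (range v) := by
  intro w hw
  have hμ₀ (i : ι) : 0 ≤ c i * (b i - ⟪w, x i⟫) := mul_nonneg (hc_pos i).le (sub_nonneg.2 (hw i))
  rcases hB.eq_or_lt with hB₀ | hB_pos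
  · obtain ⟨i⟩ := ‹Nonempty ι›
    have htight (k : ι) : ⟪w, x k⟫ = b k := by
      have := (Finset.sum_eq_zero_iff_of_nonneg fun k _ => hμ₀ k).mp
        ((sum_mul_sub_inner hc w).trans hB₀.symm) k (mem_univ k)
      linarith [(mul_eq_zero.mp this).resolve_left (hc_pos k).ne']
    suffices w = v i from this ▸ subset_convexHull ℝ _ (mem_range_self i)
    refine eq_of_forall_inner_eq_of_span_eq_top hx fun k => ?_
    rcases eq_or_ne k i with rfl | hki
    · have := mul_inner_vertex_self hc hv k
      rw [← hB₀, sub_zero] at this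
      rw [htight k, mul_left_cancel₀ (hc_pos k).ne' this]
    · rw [htight k, hv i k hki]
  · refine mem_convexHull_of_exists_fintype (fun i => c i * (b i - ⟪w, x i⟫) / ∑ j, c j * b j) v
      (fun i => div_nonneg (hμ₀ i) hB_pos.le) ?_ (fun i => mem_range_self i) ?_
    · rw [← Finset.sum_div, sum_mul_sub_inner hc w, div_self hB_pos.ne']
    · simp only [div_eq_inv_mul, mul_smul _ (c _ * _), ← Finset.smul_sum]
      rw [sum_smul_vertex hc hv hx w, inv_smul_smul₀ hB_pos.ne']

theorem feasibleSet_eq_convexHull [Nonempty ι] (hc_pos : ∀ i, 0 < c i)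
    (hc : ∑ i, c i • x i = 0) (hv : ∀ i j, j ≠ i → ⟪v i, x j⟫ = b j)
    (hx : Submodule.span ℝ (range x) = ⊤) (hB : 0 ≤ ∑ j, c j * b j) :
    feasibleSet x b = convexHull ℝ (range v) :=
  (feasibleSet_subset_convexHull hc_pos hc hv hx hB).antisymm <|
    convexHull_min (range_subset_iff.2 (vertex_mem_feasibleSet hc_pos hc hv hB))
      (convex_feasibleSet x b)

end Polytope

/-- For a differentiable convex `f : ℝ^d → ℝ` and points
`x 0, …, x d` whose convex hull contains the origin in its interior, the set of
feasible gradients `A = {v | ∀ i, v · x i ≤ ∇f(x i) · x i}` equals the convex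
hull of the vertices `v 0, …, v d` (where `v i · x j = ∇f(x j) · x j` for all
`j ≠ i`), and `A` is compact. -/
theorem statement3 (d : ℕ)
    (f : EuclideanSpace ℝ (Fin d) → ℝ)
    (hf : ConvexOn ℝ Set.univ f) (hdf : Differentiable ℝ f)
    (x : Fin (d + 1) → EuclideanSpace ℝ (Fin d))
    (hx : (0 : EuclideanSpace ℝ (Fin d)) ∈ interior (convexHull ℝ (Set.range x)))
    (v : Fin (d + 1) → EuclideanSpace ℝ (Fin d))
    (hv : ∀ i j, j ≠ i → (inner ℝ (v i) (x j) : ℝ) = inner ℝ (gradient f (x j)) (x j)) :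
    ({w : EuclideanSpace ℝ (Fin d) |
        ∀ k, (inner ℝ w (x k) : ℝ) ≤ inner ℝ (gradient f (x k)) (x k)}
      = convexHull ℝ (Set.range v)) ∧
    IsCompact {w : EuclideanSpace ℝ (Fin d) |
        ∀ k, (inner ℝ w (x k) : ℝ) ≤ inner ℝ (gradient f (x k)) (x k)} := by
  obtain ⟨c, hc_pos, hc_sum, hc⟩ := exists_pos_weights_of_zero_mem_interior_convexHull hx
  have hspan : Submodule.span ℝ (range x) = ⊤ := by
    have := affineSpan_eq_top_of_nonempty_interior ⟨0, hx⟩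
    exact top_unique fun y _ =>
      affineSpan_subset_span (k := ℝ) (this ▸ AffineSubspace.mem_top ℝ _ y)
  have hB := hf.sum_mul_inner_gradient_nonneg univ hdf (fun i _ => (hc_pos i).le) hc_sum hc
  have hA : feasibleSet x (fun k => ⟪gradient f (x k), x k⟫) = convexHull ℝ (range v) :=
    feasibleSet_eq_convexHull hc_pos hc hv hspan hB
  exact ⟨hA, show IsCompact (feasibleSet x _) from
    hA ▸ (finite_range v).isCompact_convexHull (𝕜 := ℝ)⟩
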